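/- arXiv:1801.08876 — 5 statements merged into one kernel-verified Lean document; each statement's English description precedes it below -/
import Mathlib

section
/- For every integer k > 2, there exists a finite tree T with maximum degree exactly k whose edge set cannot be partitioned into two parts M and I such that M is a matching and I is a locally irregular part. -/
/-!
The tree: a root joined to hubs `0, …, k - 1`, hub `i` carrying pendant paths of length two,
`k - 2` of them if `i < 2` and `k - 1` otherwise. So the root has degree `k`, hubs `0` and `1`
degree `k - 1` and the other hubs degree `k`.

On a pendant path `x - m - l`, an edge `xm` in the matching would force `ml` into the irregular
part with both ends of irregular degree `1`. Hence every hub keeps all its non-root edges in the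
irregular part, and its irregular degree is its degree as soon as its root edge is irregular too.
The matching covers at most one root edge: if none, the root and hub `2` both have irregular
degree `k`; if one, the root has irregular degree `k - 1`, and so has whichever of hubs `0`, `1`
keeps its root edge.
-/

open SimpleGraph

variable {V : Type*}

/-- The degree of a vertex `v` in an edge part `E`: the number of edges of `E` incident to `v`. -/
noncomputable def partDeg (E : Set (Sym2 V)) (v : V) : ℕ :=
  {e ∈ E | v ∈ e}.ncard

/-- A part is a matching if no two of its edges share a vertex. -/
def IsMatchingPart (E : Set (Sym2 V)) : Prop :=
  ∀ e ∈ E, ∀ f ∈ E, e ≠ f → ∀ v : V, v ∈ e → v ∉ f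

/-- A part is locally irregular if the endpoints of each of its edges have distinct degrees. -/
def IsLocallyIrregularPart (E : Set (Sym2 V)) : Prop :=
  ∀ u v : V, s(u, v) ∈ E → partDeg E u ≠ partDeg E v

/-- A part is locally regular if the endpoints of each of its edges have equal degrees. -/
def IsLocallyRegularPart (E : Set (Sym2 V)) : Prop :=
  ∀ u v : V, s(u, v) ∈ E → partDeg E u = partDeg E v

/-- A part is regular if all vertices incident to one of its edges have the same degree `r ≥ 1`. -/
def IsRegularPart (E : Set (Sym2 V)) : Prop :=
  ∃ r : ℕ, 1 ≤ r ∧ ∀ v : V, (∃ e ∈ E, v ∈ e) → partDeg E v = r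

/-- A part is `r`-regular if every vertex incident to one of its edges has degree `r` in it. -/
def IsRegularPartOfDeg (r : ℕ) (E : Set (Sym2 V)) : Prop :=
  ∀ v : V, (∃ e ∈ E, v ∈ e) → partDeg E v = r

/-- A part is locally `k`-irregular if endpoint degrees of each edge differ by at least `k`. -/
def IsLocallyKIrregularPart (k : ℕ) (E : Set (Sym2 V)) : Prop :=
  ∀ u v : V, s(u, v) ∈ E → (k : ℤ) ≤ |(partDeg E u : ℤ) - (partDeg E v : ℤ)|

/-- The maximum degree of a finite graph. -/
noncomputable def maxDeg [Fintype V] (G : SimpleGraph V) : ℕ :=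
  Finset.univ.sup fun v => partDeg G.edgeSet v

section PartDeg

variable {W : Type*}

theorem partDeg_edgeSet (G : SimpleGraph V) (v : V) [Fintype (G.neighborSet v)] :
    partDeg G.edgeSet v = G.degree v := by
  classical
  rw [← card_neighborSet_eq_degree, ← Nat.card_eq_fintype_card,
    ← Nat.card_congr (G.incidenceSetEquivNeighborSet v), Nat.card_coe_set_eq]
  rfl

theorem degree_eq_ncard_neighborSet (G : SimpleGraph V) (v : V) [Fintype (G.neighborSet v)] :
    G.degree v = (G.neighborSet v).ncard := by
  rw [← card_neighborSet_eq_degree, ← Nat.card_eq_fintype_card, Nat.card_coe_set_eq]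

theorem maxDeg_eq_maxDegree [Fintype V] (G : SimpleGraph V) [DecidableRel G.Adj] :
    maxDeg G = G.maxDegree := by
  simp only [maxDeg, partDeg_edgeSet]
  exact le_antisymm (Finset.sup_le fun v _ => G.degree_le_maxDegree v)
    (G.maxDegree_le_of_forall_degree_le _ fun v =>
      Finset.le_sup (f := fun v => G.degree v) (Finset.mem_univ v))

theorem partDeg_preimage_map {f : V → W} (hf : f.Bijective) (E : Set (Sym2 W)) (v : V) :
    partDeg (Sym2.map f ⁻¹' E) v = partDeg E (f v) := by
  have hsurj : Function.Surjective (Sym2.map f) := by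
    intro e
    induction e using Sym2.ind with
    | _ a b =>
      obtain ⟨a', rfl⟩ := hf.2 a
      obtain ⟨b', rfl⟩ := hf.2 b
      exact ⟨s(a', b'), rfl⟩
  have hsep : {e ∈ Sym2.map f ⁻¹' E | v ∈ e} = Sym2.map f ⁻¹' {e ∈ E | f v ∈ e} := by
    ext e
    simp only [Set.mem_preimage, Set.mem_ofPred_eq, Sym2.mem_map, hf.1.eq_iff, exists_eq_right]
  rw [partDeg, partDeg, hsep, Set.ncard_preimage_of_injective_subset_range
    (Sym2.map.injective hf.1) (by simp [hsurj.range_eq])]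

variable [Finite V] {E F : Set (Sym2 V)}

theorem partDeg_union (h : Disjoint E F) (v : V) :
    partDeg (E ∪ F) v = partDeg E v + partDeg F v := by
  have hsep : {e ∈ E ∪ F | v ∈ e} = {e ∈ E | v ∈ e} ∪ {e ∈ F | v ∈ e} := Set.sep_union
  rw [partDeg, hsep, Set.ncard_union_eq (h.mono (Set.sep_subset _ _) (Set.sep_subset _ _))]
  rfl

theorem one_le_partDeg {e : Sym2 V} {v : V} (he : e ∈ E) (hv : v ∈ e) : 1 ≤ partDeg E v :=
  (Set.ncard_pos).mpr ⟨e, he, hv⟩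

theorem IsMatchingPart.partDeg_le_one (hE : IsMatchingPart E) (v : V) : partDeg E v ≤ 1 :=
  (Set.ncard_le_one).mpr fun e he f hf => by_contra fun hne => hE e he.1 f hf.1 hne v he.2 hf.2

end PartDeg

structure IsMatchingIrregularPartition (G : SimpleGraph V) (M I : Set (Sym2 V)) :
    Prop where
  union_eq : M ∪ I = G.edgeSet
  disjoint : Disjoint M I
  isMatchingPart : IsMatchingPart M
  isLocallyIrregularPart : IsLocallyIrregularPart I

namespace IsMatchingIrregularPartition

variable {W : Type*} {G : SimpleGraph V}

theorem comap {G' : SimpleGraph W} {M I : Set (Sym2 W)} (φ : G ≃g G')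
    (h : IsMatchingIrregularPartition G' M I) :
    IsMatchingIrregularPartition G (Sym2.map φ ⁻¹' M) (Sym2.map φ ⁻¹' I) where
  union_eq := by
    rw [← Set.preimage_union, h.union_eq]
    ext e
    induction e using Sym2.ind
    simp [φ.map_adj_iff]
  disjoint := h.disjoint.preimage _
  isMatchingPart e he f hf hne v hve hvf :=
    h.isMatchingPart _ he _ hf (fun hef => hne (Sym2.map.injective φ.injective hef)) (φ v)
      (Sym2.mem_map.mpr ⟨v, hve, rfl⟩) (Sym2.mem_map.mpr ⟨v, hvf, rfl⟩)
  isLocallyIrregularPart u v huv := by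
    rw [partDeg_preimage_map φ.bijective, partDeg_preimage_map φ.bijective]
    exact h.isLocallyIrregularPart (φ u) (φ v) huv

variable {M I : Set (Sym2 V)}

theorem mem_irregular_of_notMem (h : IsMatchingIrregularPartition G M I) {e : Sym2 V}
    (he : e ∈ G.edgeSet) (heM : e ∉ M) : e ∈ I :=
  (h.union_eq ▸ he : e ∈ M ∪ I).resolve_left heM

theorem mem_matching_of_notMem (h : IsMatchingIrregularPartition G M I) {e : Sym2 V}
    (he : e ∈ G.edgeSet) (heI : e ∉ I) : e ∈ M :=
  (h.union_eq ▸ he : e ∈ M ∪ I).resolve_right heI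

theorem mem_irregular_of_mem_matching (h : IsMatchingIrregularPartition G M I) {e f : Sym2 V}
    {v : V} (he : e ∈ M) (hf : f ∈ G.edgeSet) (hne : e ≠ f) (hve : v ∈ e) (hvf : v ∈ f) :
    f ∈ I :=
  h.mem_irregular_of_notMem hf fun hfM => h.isMatchingPart e he f hfM hne v hve hvf

theorem partDeg_matching_add_partDeg_irregular [Finite V] (h : IsMatchingIrregularPartition G M I)
    (v : V) [Fintype (G.neighborSet v)] : partDeg M v + partDeg I v = G.degree v := by
  rw [← partDeg_union h.disjoint, h.union_eq, partDeg_edgeSet]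

theorem partDeg_irregular_eq_degree (h : IsMatchingIrregularPartition G M I) (v : V)
    [Fintype (G.neighborSet v)] (hv : ∀ w, G.Adj v w → s(v, w) ∈ I) :
    partDeg I v = G.degree v := by
  rw [← partDeg_edgeSet, partDeg, partDeg]
  congr 1
  ext e
  refine ⟨fun he => ⟨h.union_eq ▸ Or.inr he.1, he.2⟩, fun ⟨he, hve⟩ => ⟨?_, hve⟩⟩
  obtain ⟨w, rfl⟩ := Sym2.mem_iff_exists.mp hve
  exact hv w he

theorem mem_irregular_of_pendant_path [Fintype V] [DecidableRel G.Adj]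
    (h : IsMatchingIrregularPartition G M I) {x m l : V} (hxm : G.Adj x m) (hml : G.Adj m l)
    (hxl : x ≠ l) (hm : G.degree m = 2) (hl : G.degree l = 1) : s(x, m) ∈ I := by
  by_contra hxmI
  have hxmM : s(x, m) ∈ M := h.mem_matching_of_notMem hxm hxmI
  have hmlI : s(m, l) ∈ I := h.mem_irregular_of_mem_matching hxmM hml
    (by simp [hxl, hxm.ne]) (Sym2.mem_mk_right _ _) (Sym2.mem_mk_left _ _)
  have hmM := one_le_partDeg hxmM (Sym2.mem_mk_right _ _)
  have hmI := one_le_partDeg hmlI (Sym2.mem_mk_left _ _)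
  have hlI := one_le_partDeg hmlI (Sym2.mem_mk_right _ _)
  have hm' := h.partDeg_matching_add_partDeg_irregular m
  have hl' := h.partDeg_matching_add_partDeg_irregular l
  exact h.isLocallyIrregularPart m l hmlI (by omega)

theorem false_of_star [Fintype V] [DecidableRel G.Adj] (h : IsMatchingIrregularPartition G M I)
    {r x₀ x₁ x₂ : V} (hx₀ : G.Adj r x₀) (hx₁ : G.Adj r x₁) (hx₂ : G.Adj r x₂) (hx₀₁ : x₀ ≠ x₁)
    (hdeg₀ : G.degree x₀ + 1 = G.degree r) (hdeg₁ : G.degree x₁ + 1 = G.degree r)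
    (hdeg₂ : G.degree x₂ = G.degree r)
    (hforced : ∀ x, G.Adj r x → ∀ w, G.Adj x w → w ≠ r → s(x, w) ∈ I) : False := by
  have hspoke : ∀ x, G.Adj r x → s(r, x) ∈ I → G.degree x ≠ partDeg I r := by
    intro x hx hxI
    rw [← h.partDeg_irregular_eq_degree x fun w hw => ?_]
    · exact (h.isLocallyIrregularPart r x hxI).symm
    by_cases hwr : w = r
    · rwa [hwr, Sym2.eq_swap]
    · exact hforced x hx w hw hwr
  have hr := h.partDeg_matching_add_partDeg_irregular r
  rcases Nat.le_one_iff_eq_zero_or_eq_one.mp (h.isMatchingPart.partDeg_le_one r) with hM | hM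
  · refine hspoke x₂ hx₂ (h.mem_irregular_of_notMem hx₂ fun hx₂M => ?_) (by omega)
    have := one_le_partDeg hx₂M (Sym2.mem_mk_left _ _)
    omega
  · by_cases hx₀I : s(r, x₀) ∈ I
    · exact hspoke x₀ hx₀ hx₀I (by omega)
    · refine hspoke x₁ hx₁ ?_ (by omega)
      exact h.mem_irregular_of_mem_matching (h.mem_matching_of_notMem hx₀ hx₀I) hx₁
        (fun he => hx₀₁ (Sym2.congr_right.mp he)) (Sym2.mem_mk_left _ _) (Sym2.mem_mk_left _ _)

end IsMatchingIrregularPartition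

-- A fixed point of `p` is a root: `fromRel` drops the loop there.
def parentGraph (p : V → V) : SimpleGraph V :=
  SimpleGraph.fromRel fun u v => p u = v

theorem parentGraph_adj {p : V → V} {u v : V} :
    (parentGraph p).Adj u v ↔ u ≠ v ∧ (p u = v ∨ p v = u) :=
  fromRel_adj ..

theorem parentGraph_adj_parent {p : V → V} {v : V} (hv : p v ≠ v) : (parentGraph p).Adj (p v) v :=
  parentGraph_adj.mpr ⟨hv, Or.inr rfl⟩

theorem edgeSet_parentGraph (p : V → V) :
    (parentGraph p).edgeSet = (fun v => s(v, p v)) '' {v | p v ≠ v} := by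
  ext e
  induction e using Sym2.ind with
  | _ a b =>
    simp only [mem_edgeSet, parentGraph_adj, Set.mem_image, Set.mem_ofPred_eq]
    constructor
    · rintro ⟨hab, rfl | rfl⟩
      · exact ⟨a, hab.symm, rfl⟩
      · exact ⟨b, hab, Sym2.eq_swap⟩
    · rintro ⟨w, hw, hwe⟩
      rcases Sym2.eq_iff.mp hwe with ⟨rfl, rfl⟩ | ⟨rfl, rfl⟩
      · exact ⟨Ne.symm hw, Or.inl rfl⟩
      · exact ⟨hw, Or.inr rfl⟩

theorem isTree_parentGraph [Finite V] {p : V → V} (rank : V → ℕ) (root : V)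
    (hroot : ∀ v, p v = v ↔ v = root) (hrank : ∀ v, v ≠ root → rank (p v) < rank v) :
    (parentGraph p).IsTree := by
  have hnonroot : {v | p v ≠ v} = {root}ᶜ := by
    ext v
    simp [hroot]
  have hinj : Set.InjOn (fun v => s(v, p v)) {root}ᶜ := by
    intro u hu v hv huv
    rcases Sym2.eq_iff.mp huv with ⟨huv, -⟩ | ⟨rfl, hpp⟩
    · exact huv
    · have h₁ := hrank v hv
      have h₂ := hrank (p v) hu
      rw [hpp] at h₂
      omega
  refine isTree_iff_connected_and_card.mpr ⟨?_, ?_⟩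
  · refine (connected_iff_exists_forall_reachable _).mpr ⟨root, fun v => ?_⟩
    induction v using (measure rank).wf.induction with
    | _ v ih =>
      by_cases hv : v = root
      · rw [hv]
      · exact (ih (p v) (hrank v hv)).trans
          (parentGraph_adj_parent ((hroot v).not.mpr hv)).reachable
  · rw [Nat.card_coe_set_eq, edgeSet_parentGraph, hnonroot, hinj.ncard_image,
      ← Set.ncard_add_ncard_compl {root}, Set.ncard_singleton, add_comm]

namespace PendantTree

variable (k : ℕ)

def pendantCount (i : Fin k) : ℕ := if (i : ℕ) < 2 then k - 2 else k - 1

abbrev Pendant := (i : Fin k) × Fin (pendantCount k i)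

abbrev Vertex := Unit ⊕ Fin k ⊕ Pendant k × Bool

def root : Vertex k := .inl ()
def hub (i : Fin k) : Vertex k := .inr (.inl i)
def mid (a : Pendant k) : Vertex k := .inr (.inr (a, false))
def leaf (a : Pendant k) : Vertex k := .inr (.inr (a, true))

def parent : Vertex k → Vertex k
  | .inl _ => root k
  | .inr (.inl _) => root k
  | .inr (.inr (a, false)) => hub k a.1
  | .inr (.inr (a, true)) => mid k a

def rank : Vertex k → ℕ
  | .inl _ => 0
  | .inr (.inl _) => 1
  | .inr (.inr (_, false)) => 2
  | .inr (.inr (_, true)) => 3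

abbrev tree : SimpleGraph (Vertex k) := parentGraph (parent k)

theorem isTree_tree : (tree k).IsTree :=
  isTree_parentGraph (rank k) (root k)
    (by rintro (_ | _ | ⟨_, _ | _⟩) <;> simp [parent, root, hub, mid])
    (by rintro (_ | _ | ⟨_, _ | _⟩) <;> simp [parent, rank, root, hub, mid])

variable {k}

theorem neighborSet_root : (tree k).neighborSet (root k) = Set.range (hub k) := by
  ext v
  rcases v with _ | _ | ⟨_, _ | _⟩ <;> simp [parentGraph_adj, parent, root, hub, mid]

theorem neighborSet_hub (i : Fin k) :
    (tree k).neighborSet (hub k i) = insert (root k) (Set.range fun j => mid k ⟨i, j⟩) := by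
  ext v
  rcases v with _ | _ | ⟨⟨i', j⟩, _ | _⟩ <;> simp [parentGraph_adj, parent, root, hub, mid]
  exact ⟨by rintro rfl; exact ⟨rfl, j, HEq.rfl⟩, fun h => h.1.symm⟩

theorem neighborSet_mid (a : Pendant k) :
    (tree k).neighborSet (mid k a) = {hub k a.1, leaf k a} := by
  ext v
  rcases v with _ | _ | ⟨_, _ | _⟩ <;> simp [parentGraph_adj, parent, root, hub, mid, leaf, eq_comm]

theorem neighborSet_leaf (a : Pendant k) :
    (tree k).neighborSet (leaf k a) = {mid k a} := by
  ext v
  rcases v with _ | _ | ⟨_, _ | _⟩ <;> simp [parentGraph_adj, parent, root, hub, mid, leaf, eq_comm]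

noncomputable instance : DecidableRel (tree k).Adj := Classical.decRel _

theorem adj_root_hub (i : Fin k) : (tree k).Adj (root k) (hub k i) :=
  parentGraph_adj_parent (v := hub k i) (by simp [parent, root, hub])

theorem adj_hub_mid (a : Pendant k) : (tree k).Adj (hub k a.1) (mid k a) :=
  parentGraph_adj_parent (v := mid k a) (by simp [parent, hub, mid])

theorem adj_mid_leaf (a : Pendant k) : (tree k).Adj (mid k a) (leaf k a) :=
  parentGraph_adj_parent (v := leaf k a) (by simp [parent, mid, leaf])

theorem hub_injective : Function.Injective (hub k) := fun i j h => by simpa [hub] using h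

theorem degree_root : (tree k).degree (root k) = k := by
  rw [degree_eq_ncard_neighborSet, neighborSet_root, Set.ncard_range_of_injective hub_injective,
    Nat.card_fin]

theorem degree_hub (i : Fin k) : (tree k).degree (hub k i) = pendantCount k i + 1 := by
  have hmid : Function.Injective fun j => mid k ⟨i, j⟩ := fun j j' h => by simpa [mid] using h
  rw [degree_eq_ncard_neighborSet, neighborSet_hub,
    Set.ncard_insert_of_notMem (by simp [root, mid]), Set.ncard_range_of_injective hmid,
    Nat.card_fin]

theorem degree_mid (a : Pendant k) : (tree k).degree (mid k a) = 2 := by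
  rw [degree_eq_ncard_neighborSet, neighborSet_mid, Set.ncard_pair (by simp [hub, leaf])]

theorem degree_leaf (a : Pendant k) : (tree k).degree (leaf k a) = 1 := by
  rw [degree_eq_ncard_neighborSet, neighborSet_leaf, Set.ncard_singleton]

theorem Pendant.three_le (a : Pendant k) : 3 ≤ k := by
  have := a.2.pos
  rw [pendantCount] at this
  split_ifs at this <;> omega

theorem maxDegree_tree : (tree k).maxDegree = k := by
  refine le_antisymm ((tree k).maxDegree_le_of_forall_degree_le k ?_)
    ((degree_root (k := k)).ge.trans ((tree k).degree_le_maxDegree (root k)))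
  rintro (_ | i | ⟨a, _ | _⟩)
  · exact (degree_root (k := k)).le
  · rw [show Sum.inr (Sum.inl i) = hub k i from rfl, degree_hub, pendantCount]
    split_ifs <;> omega
  · exact (degree_mid a).trans_le (by have := a.three_le; omega)
  · exact (degree_leaf a).trans_le (by have := a.three_le; omega)

theorem not_isMatchingIrregularPartition (hk : 2 < k) (M I : Set (Sym2 (Vertex k))) :
    ¬ IsMatchingIrregularPartition (tree k) M I := by
  intro h
  have hforced : ∀ x, (tree k).Adj (root k) x → ∀ w, (tree k).Adj x w → w ≠ root k →
      s(x, w) ∈ I := by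
    intro x hx w hw hwr
    rw [← mem_neighborSet, neighborSet_root] at hx
    obtain ⟨i, rfl⟩ := hx
    rw [← mem_neighborSet, neighborSet_hub] at hw
    obtain ⟨j, rfl⟩ := hw.resolve_left hwr
    exact h.mem_irregular_of_pendant_path (adj_hub_mid ⟨i, j⟩) (adj_mid_leaf ⟨i, j⟩)
      (by simp [hub, leaf]) (degree_mid _) (degree_leaf _)
  refine h.false_of_star (adj_root_hub ⟨0, by omega⟩) (adj_root_hub ⟨1, by omega⟩)
    (adj_root_hub ⟨2, hk⟩) (by simp [hub]) ?_ ?_ ?_ hforced <;>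
  · simp [degree_hub, degree_root, pendantCount]
    omega

end PendantTree

/-- For every integer k > 2 there is a finite tree with maximum degree exactly k
whose edge set cannot be partitioned into a matching and a locally irregular part. -/
theorem stmt_0 (k : ℕ) (hk : 2 < k) :
    ∃ (n : ℕ) (T : SimpleGraph (Fin n)),
      T.IsTree ∧ maxDeg T = k ∧
      ¬ ∃ M I : Set (Sym2 (Fin n)),
          M ∪ I = T.edgeSet ∧ Disjoint M I ∧
          IsMatchingPart M ∧ IsLocallyIrregularPart I := by
  classical
  let φ := Iso.comap (Fintype.equivFin (PendantTree.Vertex k)).symm (PendantTree.tree k)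
  refine ⟨_, _, φ.isTree_iff.mpr (PendantTree.isTree_tree k), ?_, ?_⟩
  · rw [maxDeg_eq_maxDegree, φ.maxDegree_eq, PendantTree.maxDegree_tree]
  · rintro ⟨M, I, hunion, hdisj, hM, hI⟩
    exact PendantTree.not_isMatchingIrregularPartition hk _ _
      (IsMatchingIrregularPartition.comap φ.symm ⟨hunion, hdisj, hM, hI⟩)
end

section
/- The edge set of every finite tree T can be partitioned into two (possibly empty) parts R and P such that R is a matching and every connected component of the spanning subgraph with edge set P is either a single edge or a locally irregular graph (a graph in which every two adjacent vertices have distinct degrees). -/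
open SimpleGraph

variable {V : Type*}

/-!
Root the tree and decide the edges top-down. A non-root vertex whose edge to its parent lies in
`P` gets degree `k` or `k + 1` in `P`, where `k` is its number of children; it takes whichever
differs from the degree of its parent, and taking `k` means sending one child edge to `R`.
A leaf has degree `1` in `P`, which is harmless: its edge is then either a single-edge component
or has endpoints of distinct degrees. A child edge is sent to `R` only by a vertex whose parent
edge is in `P`, and each vertex sends at most one, so `R` is a matching.
-/

/-- A rooted tree given by its parent map; `depth` makes following parents terminate at `root`. -/
structure ParentMap (V : Type*) where
  root : V
  parent : V → V
  depth : V → ℕ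
  depth_parent : ∀ v, v ≠ root → depth (parent v) + 1 = depth v

namespace ParentMap

variable (t : ParentMap V)

def parentEdge (c : V) : Sym2 V := s(c, t.parent c)

def edgeSet : Set (Sym2 V) := t.parentEdge '' {c | c ≠ t.root}

def children (v : V) : Set V := {c | c ≠ t.root ∧ t.parent c = v}

noncomputable def numChildren (v : V) : ℕ := (t.children v).ncard

open Classical in
noncomputable def someChild (v : V) : V :=
  if h : (t.children v).Nonempty then h.some else v

open Classical in
noncomputable def topDown {α : Type*} (base : α) (step : V → α → α) (v : V) : α :=
  if h : v = t.root then base else step v (topDown base step (t.parent v))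
termination_by t.depth v
decreasing_by have := t.depth_parent v h; omega

variable {t}

lemma parent_ne_self {c : V} (hc : c ≠ t.root) : t.parent c ≠ c := by
  intro h
  have := t.depth_parent c hc
  rw [h] at this
  omega

lemma injOn_parentEdge : Set.InjOn t.parentEdge {c | c ≠ t.root} := by
  intro c hc c' hc' h
  rcases Sym2.eq_iff.1 h with ⟨h, -⟩ | ⟨h₁, h₂⟩
  · exact h
  · have := t.depth_parent c hc
    have := t.depth_parent c' hc'
    rw [h₂] at *
    rw [← h₁] at *
    omega

lemma someChild_mem {v : V} (h : t.numChildren v ≠ 0) :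
    t.someChild v ∈ t.children v := by
  have hne : (t.children v).Nonempty := Set.nonempty_of_ncard_ne_zero h
  rw [someChild, dif_pos hne]
  exact hne.some_mem

lemma topDown_root {α : Type*} (base : α) (step : V → α → α) :
    t.topDown base step t.root = base := by
  rw [topDown, dif_pos rfl]

lemma topDown_of_ne_root {α : Type*} (base : α) (step : V → α → α) {v : V}
    (hv : v ≠ t.root) :
    t.topDown base step v = step v (t.topDown base step (t.parent v)) := by
  rw [topDown, dif_neg hv]

open Classical in
lemma partDeg_image_parentEdge [Finite V] {S : Set V} (hS : S ⊆ {c | c ≠ t.root}) (v : V) :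
    partDeg (t.parentEdge '' S) v =
      (if v ∈ S then 1 else 0) + {c ∈ S | t.parent c = v}.ncard := by
  have hsplit : {e ∈ t.parentEdge '' S | v ∈ e} =
      t.parentEdge '' ({c ∈ S | c = v} ∪ {c ∈ S | t.parent c = v}) := by
    ext e
    simp only [Set.mem_ofPred_eq, Set.mem_image, Set.mem_union, parentEdge]
    constructor
    · rintro ⟨⟨c, hc, rfl⟩, hv⟩
      exact ⟨c, by rcases Sym2.mem_iff.1 hv with rfl | rfl <;> simp [hc], rfl⟩
    · rintro ⟨c, hc, rfl⟩
      refine ⟨⟨c, by tauto, rfl⟩, ?_⟩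
      rcases hc with ⟨-, rfl⟩ | ⟨-, rfl⟩ <;> simp
  have hdisj : Disjoint {c ∈ S | c = v} {c ∈ S | t.parent c = v} :=
    Set.disjoint_left.2 fun c ⟨hc, hcv⟩ ⟨_, hpc⟩ =>
      parent_ne_self (hS hc) (hpc.trans hcv.symm)
  rw [partDeg, hsplit, (injOn_parentEdge.mono fun c hc => ?_).ncard_image,
    Set.ncard_union_eq hdisj]
  · split_ifs with hv
    · rw [show {c ∈ S | c = v} = {v} from
          Set.ext fun c => ⟨fun h => h.2, fun h => by subst h; exact ⟨hv, rfl⟩⟩,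
        Set.ncard_singleton]
    · rw [show {c ∈ S | c = v} = ∅ from
        Set.ext fun c => ⟨fun h => hv (h.2 ▸ h.1), False.elim⟩, Set.ncard_empty]
  · rcases hc with ⟨hc, -⟩ | ⟨hc, -⟩ <;> exact hS hc

variable (t)

open Classical in
/-- `(t.label v).1` says whether the edge from `v` to its parent goes to the matching (`true` at the
root, so that no child edge of the root does), and `(t.label v).2` is the degree of `v` in the
other part. A vertex with `HasMatchedChild` sends the edge to `someChild` to the matching. -/
noncomputable def label : V → Bool × ℕ :=
  t.topDown (true, t.numChildren t.root) fun v l =>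
    if l.1 = false ∧ l.2 = t.numChildren (t.parent v) ∧ v = t.someChild (t.parent v) then
      (true, t.numChildren v)
    else
      (false, if t.numChildren v = 0 then 1
        else if l.2 = t.numChildren v + 1 then t.numChildren v else t.numChildren v + 1)

def HasMatchedChild (v : V) : Prop :=
  (t.label v).1 = false ∧ (t.label v).2 = t.numChildren v

def matched : Set V := {c | c ≠ t.root ∧ (t.label c).1 = true}

def unmatched : Set V := {c | c ≠ t.root ∧ (t.label c).1 = false}

variable {t}

lemma label_root : t.label t.root = (true, t.numChildren t.root) := by
  rw [label, topDown_root]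

open Classical in
lemma label_of_ne_root {v : V} (hv : v ≠ t.root) :
    t.label v =
      if (t.label (t.parent v)).1 = false ∧
          (t.label (t.parent v)).2 = t.numChildren (t.parent v) ∧
          v = t.someChild (t.parent v) then
        (true, t.numChildren v)
      else
        (false, if t.numChildren v = 0 then 1
          else if (t.label (t.parent v)).2 = t.numChildren v + 1 then t.numChildren v
          else t.numChildren v + 1) := by
  rw [label, topDown_of_ne_root _ _ hv, ← label]

lemma label_fst_iff {c : V} (hc : c ≠ t.root) :
    (t.label c).1 = true ↔ t.HasMatchedChild (t.parent c) ∧ c = t.someChild (t.parent c) := by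
  rw [label_of_ne_root hc, HasMatchedChild, and_assoc]
  split_ifs with h <;> simpa using h

lemma label_snd_of_fst {v : V} (h : (t.label v).1 = true) : (t.label v).2 = t.numChildren v := by
  by_cases hv : v = t.root
  · rw [hv, label_root]
  · rw [label_of_ne_root hv] at h ⊢
    split_ifs at h ⊢
    rfl

lemma label_snd_of_not_fst {v : V} (hv : v ≠ t.root) (h : (t.label v).1 = false) :
    (t.label v).2 = if t.numChildren v = 0 then 1
      else if (t.label (t.parent v)).2 = t.numChildren v + 1 then t.numChildren v
      else t.numChildren v + 1 := by
  rw [label_of_ne_root hv] at h ⊢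
  split_ifs at h ⊢ <;> rfl

lemma numChildren_ne_zero_of_hasMatchedChild {v : V} (h : t.HasMatchedChild v) :
    t.numChildren v ≠ 0 := by
  obtain ⟨hl, hd⟩ := h
  have hv : v ≠ t.root := by rintro rfl; simp [label_root] at hl
  intro h0
  rw [label_snd_of_not_fst hv hl, if_pos h0] at hd
  omega

open Classical in
lemma ncard_unmatched_children_add [Finite V] (v : V) :
    {c ∈ t.unmatched | t.parent c = v}.ncard + (if t.HasMatchedChild v then 1 else 0) =
      t.numChildren v := by
  have key : ∀ c, c ≠ t.root → t.parent c = v →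
      ((t.label c).1 = false ↔ ¬(t.HasMatchedChild v ∧ c = t.someChild v)) := by
    rintro c hc rfl
    rw [← label_fst_iff hc, Bool.not_eq_true]
  split_ifs with hm
  · have : {c ∈ t.unmatched | t.parent c = v} = t.children v \ {t.someChild v} := by
      ext c
      simp only [unmatched, children, Set.mem_sdiff, Set.mem_ofPred_eq, Set.mem_singleton_iff]
      grind
    rw [this, Set.ncard_sdiff_singleton_add_one
      (someChild_mem (numChildren_ne_zero_of_hasMatchedChild hm))]
    rfl
  · have : {c ∈ t.unmatched | t.parent c = v} = t.children v := by
      ext c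
      simp only [unmatched, children, Set.mem_ofPred_eq]
      grind
    rw [this]
    rfl

lemma partDeg_image_unmatched [Finite V] (v : V) :
    partDeg (t.parentEdge '' t.unmatched) v = (t.label v).2 := by
  have hcount := ncard_unmatched_children_add (t := t) v
  rw [partDeg_image_parentEdge (fun c hc => hc.1)]
  cases hl : (t.label v).1
  · have hv : v ≠ t.root := by rintro rfl; simp [label_root] at hl
    have hd := label_snd_of_not_fst hv hl
    simp only [HasMatchedChild, hl, true_and] at hcount
    rw [if_pos ⟨hv, hl⟩]
    split_ifs at hd hcount <;> omega
  · simp only [HasMatchedChild, hl, Bool.true_eq_false, false_and, if_false] at hcount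
    rw [if_neg fun h => by simp [h.2] at hl, label_snd_of_fst hl]
    omega

lemma isMatchingPart_image_matched : IsMatchingPart (t.parentEdge '' t.matched) := by
  rintro _ ⟨c, ⟨hc, hlc⟩, rfl⟩ _ ⟨c', ⟨hc', hlc'⟩, rfl⟩ hne v hv hv'
  obtain ⟨⟨hpc, -⟩, hfc⟩ := (label_fst_iff hc).1 hlc
  obtain ⟨⟨hpc', -⟩, hfc'⟩ := (label_fst_iff hc').1 hlc'
  rcases Sym2.mem_iff.1 hv with rfl | rfl <;> rcases Sym2.mem_iff.1 hv' with h | h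
  · exact hne (by rw [h])
  · rw [← h, hlc] at hpc'
    exact Bool.noConfusion hpc'
  · rw [h, hlc'] at hpc
    exact Bool.noConfusion hpc
  · exact hne (by rw [hfc, hfc', h])

lemma label_snd_eq_one_or_ne_parent {c : V} (hc : c ∈ t.unmatched) :
    ((t.label c).2 = 1 ∧ (t.label (t.parent c)).2 = 1) ∨
      (t.label c).2 ≠ (t.label (t.parent c)).2 := by
  rw [label_snd_of_not_fst hc.1 hc.2]
  split_ifs <;> omega

variable (t)

theorem exists_matching_partition [Finite V] :
    ∃ R P : Set (Sym2 V), R ∪ P = t.edgeSet ∧ Disjoint R P ∧ IsMatchingPart R ∧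
      ∀ u v : V, s(u, v) ∈ P →
        (partDeg P u = 1 ∧ partDeg P v = 1) ∨ partDeg P u ≠ partDeg P v := by
  have hunion : t.matched ∪ t.unmatched = {c | c ≠ t.root} := by
    ext c
    simp only [matched, unmatched, Set.mem_union, Set.mem_ofPred_eq, ← and_or_left]
    cases (t.label c).1 <;> simp
  refine ⟨_, _, by rw [← Set.image_union, hunion, edgeSet], ?_,
    isMatchingPart_image_matched, ?_⟩
  · rw [Set.disjoint_iff_inter_eq_empty, ← injOn_parentEdge.image_inter (fun c hc => hc.1)
      (fun c hc => hc.1), Set.image_eq_empty, Set.disjoint_iff_inter_eq_empty.1]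
    exact Set.disjoint_left.2 fun c hm hu => Bool.noConfusion (hm.2.symm.trans hu.2)
  · rintro u v ⟨c, hc, huv⟩
    simp only [partDeg_image_unmatched]
    rcases Sym2.eq_iff.1 huv with ⟨rfl, rfl⟩ | ⟨rfl, rfl⟩
    · exact label_snd_eq_one_or_ne_parent hc
    · rw [ne_comm, and_comm]
      exact label_snd_eq_one_or_ne_parent hc

end ParentMap

namespace SimpleGraph

variable {G : SimpleGraph V} {r u u' v : V}

lemma Reachable.exists_adj_dist_add_one (h : G.Reachable r v) (hv : v ≠ r) :
    ∃ u, G.Adj u v ∧ G.dist r u + 1 = G.dist r v := by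
  obtain ⟨p, -, hlen⟩ := h.exists_path_of_dist
  have hadj := p.adj_penultimate (Walk.not_nil_of_ne hv.symm)
  refine ⟨p.penultimate, hadj, ?_⟩
  have hle : G.dist r p.penultimate ≤ p.length - 1 :=
    (dist_le p.dropLast).trans_eq p.length_dropLast
  have hpos : 0 < G.dist r v := h.pos_dist_of_ne hv.symm
  rcases hadj.diff_dist_adj (u := r) with h | h | h <;> omega

lemma IsAcyclic.eq_penultimate_of_adj_of_dist_add_one (hG : G.IsAcyclic) {p : G.Walk r v}
    (hp : p.IsPath) (hadj : G.Adj u v) (hu : G.dist r u + 1 = G.dist r v) :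
    u = p.penultimate := by
  classical
  refine hG.eq_penultimate_of_adj_end hp hadj.symm (by_contra fun hnot => ?_)
  have hrv : G.Reachable r v := Reachable.of_dist_ne_zero (by omega)
  obtain ⟨q, hq, hqlen⟩ := (hrv.trans hadj.symm.reachable).exists_path_of_dist
  have hv := hG.mem_support_of_ne_mem_support_of_adj_of_isPath hq hp hadj hnot
  have := (dist_le (q.takeUntil v hv)).trans (q.length_takeUntil_le_length hv)
  omega

lemma IsAcyclic.eq_of_adj_of_dist_add_one (hG : G.IsAcyclic) (hu : G.Adj u v) (hu' : G.Adj u' v)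
    (h : G.dist r u + 1 = G.dist r v) (h' : G.dist r u' + 1 = G.dist r v) : u = u' := by
  obtain ⟨p, hp⟩ := (Reachable.of_dist_ne_zero (by omega : G.dist r v ≠ 0)).exists_isPath
  rw [hG.eq_penultimate_of_adj_of_dist_add_one hp hu h,
    hG.eq_penultimate_of_adj_of_dist_add_one hp hu' h']

lemma IsTree.exists_parentMap_edgeSet_eq (hG : G.IsTree) :
    ∃ t : ParentMap V, t.edgeSet = G.edgeSet := by
  obtain ⟨r⟩ := hG.connected.nonempty
  have hpar : ∀ v, ∃ u, v ≠ r → G.Adj u v ∧ G.dist r u + 1 = G.dist r v := fun v => by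
    by_cases hv : v = r
    · exact ⟨v, fun h => (h hv).elim⟩
    · obtain ⟨u, hu⟩ := (hG.connected r v).exists_adj_dist_add_one hv
      exact ⟨u, fun _ => hu⟩
  choose par hpar using hpar
  refine ⟨⟨r, par, G.dist r, fun v hv => (hpar v hv).2⟩, ?_⟩
  have hparentEdge : ∀ {a b}, G.Adj a b → G.dist r a + 1 = G.dist r b →
      b ≠ r ∧ s(b, par b) = s(a, b) := fun {a b} hab hd => by
    have hb : b ≠ r := by rintro rfl; simp at hd
    refine ⟨hb, ?_⟩
    rw [hG.isAcyclic.eq_of_adj_of_dist_add_one (hpar b hb).1 hab (hpar b hb).2 hd, Sym2.eq_swap]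
  ext e
  constructor
  · rintro ⟨c, hc, rfl⟩
    exact (hpar c hc).1.symm
  · induction e using Sym2.ind with | _ u v => ?_
    intro hadj
    rcases hG.dist_eq_dist_add_one_of_adj r hadj with hd | hd
    · obtain ⟨hu, he⟩ := hparentEdge hadj.symm hd.symm
      exact ⟨u, hu, he.trans Sym2.eq_swap⟩
    · exact ⟨v, hparentEdge hadj hd.symm⟩

end SimpleGraph

/-- The edge set of every finite tree can be partitioned into a matching R and a
part P such that every connected component of the spanning subgraph with edge set P is a single
edge or locally irregular.  (A component is a single edge exactly when both endpoints of one of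
its edges have degree 1 in P; a component is locally irregular exactly when each of its edges
has endpoints of distinct degrees in P.  Since components are edge-connected, this is expressed
edge-locally: each edge of P either has both endpoint degrees equal to 1, or distinct degrees.) -/
theorem stmt_1 {V : Type*} [Fintype V] (T : SimpleGraph V) (hT : T.IsTree) :
    ∃ R P : Set (Sym2 V),
      R ∪ P = T.edgeSet ∧ Disjoint R P ∧
      IsMatchingPart R ∧
      ∀ u v : V, s(u, v) ∈ P →
        (partDeg P u = 1 ∧ partDeg P v = 1) ∨ partDeg P u ≠ partDeg P v := by
  obtain ⟨t, ht⟩ := hT.exists_parentMap_edgeSet_eq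
  rw [← ht]
  exact t.exists_matching_partition
end

section
/- The edge set of every finite tree T can be partitioned into three (possibly empty) parts M₁, M₂ and I such that M₁ and M₂ are matchings and I is a locally irregular part, i.e. for every edge uv ∈ I the number of edges of I incident to u differs from the number of edges of I incident to v. -/
/-!
Root the tree and decide from the root down, at every vertex `v`, which child edge (at most one)
goes into the matchings; all other edges are irregular. If the parent edge of `v` is irregular
and the parent has irregular degree `D`, then `v` can make its own irregular degree differ from
`D`: keeping its `k` child edges gives `k + 1`, moving one of them to the matchings gives `k`.
This fails only when `v` is a leaf and `D = 1`, which is prevented by having a vertex whose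
parent edge is not irregular and whose only child is a leaf move that child edge to the
matchings. Since every vertex moves at most one child edge, splitting the moved edges by the
parity of the depth of the child gives two matchings.
-/

open SimpleGraph

variable {V : Type*}

namespace SimpleGraph

variable {T : SimpleGraph V} {r : V}

lemma Connected.exists_adj_dist_add_one_eq (hT : T.Connected) {v : V} (hv : v ≠ r) :
    ∃ u, T.Adj u v ∧ T.dist r u + 1 = T.dist r v := by
  obtain ⟨p, hp⟩ := hT.exists_walk_length_eq_dist r v
  have hnil : ¬ p.Nil := fun h => hv h.eq.symm
  refine ⟨p.penultimate, p.adj_penultimate hnil, ?_⟩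
  have hle : T.dist r p.penultimate ≤ p.length - 1 := by
    simpa only [Walk.length_dropLast] using dist_le p.dropLast
  have hpos := Walk.not_nil_iff_lt_length.mp hnil
  rcases (p.adj_penultimate hnil).diff_dist_adj (u := r) with h | h | h <;> omega

lemma IsTree.eq_of_adj_of_dist_add_one_eq (hT : T.IsTree) {u₁ u₂ v : V}
    (h₁ : T.Adj u₁ v) (h₂ : T.Adj u₂ v)
    (hd₁ : T.dist r u₁ + 1 = T.dist r v) (hd₂ : T.dist r u₂ + 1 = T.dist r v) : u₁ = u₂ := by
  obtain ⟨q, hq, hql⟩ := hT.connected.exists_path_of_dist r v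
  -- otherwise `v` would lie on a shortest path to `u`, which is too short to reach it
  have key : ∀ u, T.Adj u v → T.dist r u + 1 = T.dist r v → u = q.penultimate := by
    classical
    intro u hu hdu
    refine hT.isAcyclic.eq_penultimate_of_adj_end hq hu.symm (not_not.mp fun hu_q => ?_)
    obtain ⟨p, hp, hpl⟩ := hT.connected.exists_path_of_dist r u
    have hv_p := hT.isAcyclic.mem_support_of_ne_mem_support_of_adj_of_isPath hp hq hu hu_q
    have := dist_le (p.takeUntil v hv_p)
    have := p.length_takeUntil_le_length hv_p
    omega
  rw [key u₁ h₁ hd₁, key u₂ h₂ hd₂]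

end SimpleGraph

structure Rooting (V : Type*) where
  root : V
  parent : V → V
  depth : V → ℕ
  depth_parent : ∀ v, v ≠ root → depth (parent v) + 1 = depth v

namespace Rooting

open Finset

variable (R : Rooting V)

def edge (v : V) : Sym2 V := s(R.parent v, v)

lemma parent_ne {v : V} (hv : v ≠ R.root) : R.parent v ≠ v := fun h => by
  have := R.depth_parent v hv
  rw [h] at this
  omega

lemma injOn_edge : Set.InjOn R.edge {R.root}ᶜ := by
  intro v hv w hw h
  rcases Sym2.eq_iff.mp h with ⟨-, h⟩ | ⟨hvw, hwv⟩
  · exact h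
  · have hv' := R.depth_parent v hv
    have hw' := R.depth_parent w hw
    rw [hvw] at hv'
    rw [← hwv] at hw'
    omega

lemma isMatchingPart_image_edge {S : Set V} (hinj : S.InjOn R.parent)
    (hpar : ∀ v ∈ S, R.parent v ∉ S) : IsMatchingPart (R.edge '' S) := by
  rintro _ ⟨v, hv, rfl⟩ _ ⟨w, hw, rfl⟩ hne x hxv hxw
  have hvw : v ≠ w := by rintro rfl; exact hne rfl
  rcases Sym2.mem_iff.mp hxv with rfl | rfl <;> rcases Sym2.mem_iff.mp hxw with h | h
  · exact hvw (hinj hv hw h)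
  · exact hpar v hv (h ▸ hw)
  · exact hpar w hw (h ▸ hv)
  · exact hvw h

open scoped Classical in
/-- The step of the construction at a vertex with children `C`: `up = some D` means that the edge
to the parent is irregular and the parent has irregular degree `D`; `up = none` that there is no
parent or the edge to it is in the matchings. The result is the irregular degree of the vertex
together with the child, if any, whose edge is moved to the matchings. -/
noncomputable def localRule (C : Finset V) (leaf : V → Prop) : Option ℕ → ℕ × Option V
  | some D => if h : C.Nonempty ∧ #C + 1 = D then (#C, some h.1.choose) else (#C + 1, none)
  | none => if h : ∃ w, C = {w} ∧ leaf w then (0, some h.choose) else (#C, none)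

section LocalRule

variable {C : Finset V} {leaf : V → Prop}

open scoped Classical in
lemma card_filter_localRule_add (up : Option ℕ) :
    #{w ∈ C | (localRule C leaf up).2 ≠ some w} + (if up.isSome then 1 else 0) =
      (localRule C leaf up).1 := by
  cases up with
  | some D =>
    simp only [localRule, Option.isSome_some, if_true]
    split_ifs with h
    · have := card_erase_of_mem h.1.choose_spec
      have := card_pos.mpr h.1
      simp only [ne_eq, Option.some.injEq, filter_ne]
      omega
    · simp
  | none =>
    simp only [localRule, Option.isSome_none, Bool.false_eq_true, if_false, add_zero]
    split_ifs with h
    · obtain ⟨hC, -⟩ := h.choose_spec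
      rw [card_eq_zero, filter_eq_empty_iff]
      intro w hw
      rw [hC, mem_singleton] at hw
      simp [hw]
    · simp

lemma localRule_some_fst_ne {D : ℕ} (hD : C = ∅ → D ≠ 1) : (localRule C leaf (some D)).1 ≠ D := by
  simp only [localRule]
  split_ifs with h
  · omega
  · rw [not_and, ← not_imp_not, not_nonempty_iff_eq_empty] at h
    grind

lemma not_leaf_of_localRule_fst_eq_one {up : Option ℕ} (h : (localRule C leaf up).1 = 1) {w : V}
    (hw : w ∈ C) (hne : (localRule C leaf up).2 ≠ some w) : ¬ leaf w := by
  cases up with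
  | some D =>
    simp only [localRule] at h hne
    split_ifs at h hne with hC
    · obtain ⟨x, rfl⟩ := card_eq_one.mp h
      rw [mem_singleton] at hw
      subst hw
      exact absurd (by simpa using hC.1.choose_spec) hne
    · simp [card_eq_zero.mp (by omega : #C = 0)] at hw
  | none =>
    simp only [localRule] at h hne
    split_ifs at h hne with hC
    obtain ⟨x, rfl⟩ := card_eq_one.mp h
    rw [mem_singleton] at hw
    exact fun hl => hC ⟨x, rfl, hw ▸ hl⟩

end LocalRule

section Construction

variable [Fintype V]

open scoped Classical in
noncomputable def children (v : V) : Finset V :=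
  {w | w ≠ R.root ∧ R.parent w = v}

lemma mem_children {v w : V} : w ∈ R.children v ↔ w ≠ R.root ∧ R.parent w = v := by
  simp [children]

open scoped Classical in
lemma partDeg_image_edge {S : Set V} (hS : S ⊆ {R.root}ᶜ) (v : V) :
    partDeg (R.edge '' S) v = #{w ∈ R.children v | w ∈ S} + if v ∈ S then 1 else 0 := by
  have hinc : {e ∈ R.edge '' S | v ∈ e} = R.edge '' {w ∈ S | R.parent w = v ∨ w = v} := by
    ext e
    simp only [edge, Set.mem_sep_iff, Set.mem_image]
    constructor
    · rintro ⟨⟨w, hw, rfl⟩, hve⟩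
      exact ⟨w, ⟨hw, by simpa [eq_comm] using hve⟩, rfl⟩
    · rintro ⟨w, ⟨hw, hvw⟩, rfl⟩
      exact ⟨⟨w, hw, rfl⟩, by rcases hvw with h | h <;> simp [h]⟩
  rw [partDeg, hinc, (R.injOn_edge.mono (fun w hw => hS hw.1)).ncard_image]
  have hmem : ∀ w, w ∈ {w ∈ R.children v | w ∈ S} ↔ w ∈ S ∧ R.parent w = v := fun w => by
    simpa [mem_children, and_comm] using fun hw _ => hS hw
  split_ifs with hv
  · have hv' : v ∉ {w ∈ R.children v | w ∈ S} := by
      simpa [hmem] using fun _ => R.parent_ne (hS hv)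
    rw [← card_insert_of_notMem hv', ← Set.ncard_coe_finset]
    congr 1
    ext w
    simp only [coe_insert, Set.mem_insert_iff, mem_coe, hmem]
    grind
  · rw [← Set.ncard_coe_finset]
    congr 1
    ext w
    simp only [mem_coe, hmem]
    grind

def IsLeaf (v : V) : Prop := R.children v = ∅

open scoped Classical in
noncomputable def plan (v : V) : ℕ × Option V :=
  if h : v = R.root then localRule (R.children v) R.IsLeaf none
  else
    have := R.depth_parent v h
    localRule (R.children v) R.IsLeaf <|
      if (plan (R.parent v)).2 = some v then none else some (plan (R.parent v)).1
termination_by R.depth v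

def irregularVerts : Set V := {v | v ≠ R.root ∧ (R.plan (R.parent v)).2 ≠ some v}

def matchedVerts (i : ℕ) : Set V :=
  {v | v ≠ R.root ∧ (R.plan (R.parent v)).2 = some v ∧ R.depth v % 2 = i}

lemma irregularVerts_subset_compl : R.irregularVerts ⊆ {R.root}ᶜ := fun _ hv => hv.1

lemma matchedVerts_subset_compl (i : ℕ) : R.matchedVerts i ⊆ {R.root}ᶜ := fun _ hv => hv.1

open scoped Classical in
lemma plan_eq (v : V) : R.plan v = localRule (R.children v) R.IsLeaf
    (if v ∈ R.irregularVerts then some (R.plan (R.parent v)).1 else none) := by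
  rw [plan]
  by_cases hv : v = R.root
  · simp [hv, irregularVerts]
  · by_cases hc : (R.plan (R.parent v)).2 = some v <;> simp [hv, hc, irregularVerts]

open scoped Classical in
lemma partDeg_image_edge_irregularVerts (v : V) :
    partDeg (R.edge '' R.irregularVerts) v = (R.plan v).1 := by
  have hchildren : {w ∈ R.children v | w ∈ R.irregularVerts} =
      {w ∈ R.children v | (R.plan v).2 ≠ some w} := filter_congr fun w hw => by
    obtain ⟨hw_root, rfl⟩ := R.mem_children.mp hw
    simp [irregularVerts, hw_root]
  have := card_filter_localRule_add (C := R.children v) (leaf := R.IsLeaf)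
    (if v ∈ R.irregularVerts then some (R.plan (R.parent v)).1 else none)
  rw [← R.plan_eq] at this
  rw [R.partDeg_image_edge R.irregularVerts_subset_compl, hchildren, ← this]
  by_cases hv : v ∈ R.irregularVerts <;> simp [hv]

lemma plan_fst_ne_parent {v : V} (hv : v ∈ R.irregularVerts) :
    (R.plan v).1 ≠ (R.plan (R.parent v)).1 := by
  classical
  rw [R.plan_eq v, if_pos hv]
  refine localRule_some_fst_ne fun hleaf hD => ?_
  have hne := hv.2
  rw [R.plan_eq (R.parent v)] at hD hne
  exact not_leaf_of_localRule_fst_eq_one hD (R.mem_children.mpr ⟨hv.1, rfl⟩) hne hleaf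

lemma isLocallyIrregularPart_image_edge_irregularVerts :
    IsLocallyIrregularPart (R.edge '' R.irregularVerts) := by
  rintro u w ⟨v, hv, huw⟩
  rw [R.partDeg_image_edge_irregularVerts, R.partDeg_image_edge_irregularVerts]
  rcases Sym2.eq_iff.mp huw with ⟨rfl, rfl⟩ | ⟨rfl, rfl⟩
  · exact (R.plan_fst_ne_parent hv).symm
  · exact R.plan_fst_ne_parent hv

lemma isMatchingPart_image_edge_matchedVerts (i : ℕ) :
    IsMatchingPart (R.edge '' R.matchedVerts i) := by
  refine R.isMatchingPart_image_edge (fun v hv w hw h => ?_) fun v hv hpv => ?_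
  · exact Option.some_injective _ (hv.2.1.symm.trans (h ▸ hw.2.1))
  · have := R.depth_parent v hv.1
    have := hv.2.2
    have := hpv.2.2
    omega

theorem exists_matchings_locallyIrregular_partition :
    ∃ M₁ M₂ I : Set (Sym2 V),
      M₁ ∪ M₂ ∪ I = R.edge '' {R.root}ᶜ ∧
      Disjoint M₁ M₂ ∧ Disjoint M₁ I ∧ Disjoint M₂ I ∧
      IsMatchingPart M₁ ∧ IsMatchingPart M₂ ∧ IsLocallyIrregularPart I := by
  have hcover : R.matchedVerts 0 ∪ R.matchedVerts 1 ∪ R.irregularVerts = {R.root}ᶜ := by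
    ext v
    simp only [matchedVerts, irregularVerts, Set.mem_union, Set.mem_ofPred_eq,
      Set.mem_compl_singleton_iff]
    have := Nat.mod_two_eq_zero_or_one (R.depth v)
    tauto
  have h01 : Disjoint (R.matchedVerts 0) (R.matchedVerts 1) :=
    Set.disjoint_left.mpr fun v h0 h1 => by
      have := h0.2.2.symm.trans h1.2.2
      omega
  have hI (i : ℕ) : Disjoint (R.matchedVerts i) R.irregularVerts :=
    Set.disjoint_left.mpr fun v hM hI => hI.2 hM.2.1
  refine ⟨R.edge '' R.matchedVerts 0, R.edge '' R.matchedVerts 1, R.edge '' R.irregularVerts,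
    by rw [← Set.image_union, ← Set.image_union, hcover], ?_, ?_, ?_,
    R.isMatchingPart_image_edge_matchedVerts 0, R.isMatchingPart_image_edge_matchedVerts 1,
    R.isLocallyIrregularPart_image_edge_irregularVerts⟩
  · exact h01.image R.injOn_edge (R.matchedVerts_subset_compl 0) (R.matchedVerts_subset_compl 1)
  · exact (hI 0).image R.injOn_edge (R.matchedVerts_subset_compl 0) R.irregularVerts_subset_compl
  · exact (hI 1).image R.injOn_edge (R.matchedVerts_subset_compl 1) R.irregularVerts_subset_compl

end Construction

end Rooting

lemma SimpleGraph.IsTree.exists_rooting_image_edge_eq {T : SimpleGraph V} (hT : T.IsTree) :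
    ∃ R : Rooting V, R.edge '' {R.root}ᶜ = T.edgeSet := by
  obtain ⟨r⟩ := hT.connected.nonempty
  have hpar : ∀ v, ∃ u, v ≠ r → T.Adj u v ∧ T.dist r u + 1 = T.dist r v := by
    intro v
    by_cases hv : v = r
    · exact ⟨r, fun h => absurd hv h⟩
    · exact (hT.connected.exists_adj_dist_add_one_eq hv).imp fun _ h _ => h
  choose par hpar using hpar
  refine ⟨⟨r, par, T.dist r, fun v hv => (hpar v hv).2⟩, Set.ext <| Sym2.ind fun u v => ?_⟩
  rw [SimpleGraph.mem_edgeSet]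
  refine ⟨?_, fun huv => ?_⟩
  · rintro ⟨w, hw, hwe⟩
    rw [← SimpleGraph.mem_edgeSet, ← hwe]
    exact (hpar w hw).1
  · have ne_root {x y : V} (h : T.dist r y = T.dist r x + 1) : y ≠ r := by
      rintro rfl
      simp at h
    have eq_par {x y : V} (hxy : T.Adj x y) (h : T.dist r y = T.dist r x + 1) : x = par y :=
      hT.eq_of_adj_of_dist_add_one_eq hxy (hpar y (ne_root h)).1 h.symm (hpar y (ne_root h)).2
    rcases hT.dist_eq_dist_add_one_of_adj r huv with h | h
    · exact ⟨u, ne_root h, by simp only [Rooting.edge, ← eq_par huv.symm h, Sym2.eq_swap]⟩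
    · exact ⟨v, ne_root h, by simp only [Rooting.edge, ← eq_par huv h]⟩

/-- The edge set of every finite tree can be partitioned into two matchings and a
locally irregular part. -/
theorem stmt_2 {V : Type*} [Fintype V] (T : SimpleGraph V) (hT : T.IsTree) :
    ∃ M₁ M₂ I : Set (Sym2 V),
      M₁ ∪ M₂ ∪ I = T.edgeSet ∧
      Disjoint M₁ M₂ ∧ Disjoint M₁ I ∧ Disjoint M₂ I ∧
      IsMatchingPart M₁ ∧ IsMatchingPart M₂ ∧ IsLocallyIrregularPart I := by
  obtain ⟨R, hR⟩ := hT.exists_rooting_image_edge_eq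
  rw [← hR]
  exact R.exists_matchings_locallyIrregular_partition
end

section
/- If the edge set of a finite graph G can be partitioned into r parts each of which is a regular part, then the number of distinct values occurring among the vertex degrees of G is at most 2^r. Consequently, any graph whose vertices realize more than 2^r distinct degrees has regular number greater than r. -/
/-!
Every vertex degree of `G` is the sum of its degrees in the parts. In a regular part of degree
`ρᵢ` a vertex has degree `0` or `ρᵢ`, so each degree of `G` is a subset sum `∑ i ∈ t, ρᵢ`, and
there are at most `2 ^ r` subsets `t`.
-/

open SimpleGraph

variable {V : Type*}

open scoped Function

lemma partDeg_iUnion_of_pairwise_disjoint {ι : Type*} [Finite V] [Fintype ι]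
    {P : ι → Set (Sym2 V)} (hP : Pairwise (Disjoint on P)) (v : V) :
    partDeg (⋃ i, P i) v = ∑ i, partDeg (P i) v := by
  have hunion : {e ∈ ⋃ i, P i | v ∈ e} = ⋃ i, {e ∈ P i | v ∈ e} := by
    ext e
    simp only [Set.mem_ofPred_eq, Set.mem_iUnion, exists_and_right]
  have hdisj : Pairwise (Disjoint on fun i ↦ {e ∈ P i | v ∈ e}) := fun i j hij ↦
    (hP hij).mono (Set.sep_subset _ _) (Set.sep_subset _ _)
  rw [partDeg, hunion, Set.ncard_iUnion_of_finite (fun _ ↦ Set.toFinite _) hdisj,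
    finsum_eq_sum_of_fintype]
  rfl

lemma partDeg_eq_zero_or_eq {ρ : ℕ} {E : Set (Sym2 V)}
    (hE : IsRegularPartOfDeg ρ E) (v : V) : partDeg E v = 0 ∨ partDeg E v = ρ := by
  by_cases hv : ∃ e ∈ E, v ∈ e
  · exact .inr (hE v hv)
  · have hempty : {e ∈ E | v ∈ e} = ∅ := Set.eq_empty_of_forall_notMem fun e he ↦ hv ⟨e, he⟩
    exact .inl (by rw [partDeg, hempty, Set.ncard_empty])

lemma exists_partDeg_iUnion_eq_sum {ι : Type*} [Finite V] [Fintype ι] {P : ι → Set (Sym2 V)}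
    {ρ : ι → ℕ} (hP : Pairwise (Disjoint on P)) (hreg : ∀ i, IsRegularPartOfDeg (ρ i) (P i))
    (v : V) : ∃ t : Finset ι, partDeg (⋃ i, P i) v = ∑ i ∈ t, ρ i := by
  classical
  refine ⟨({i | partDeg (P i) v ≠ 0} : Finset ι), ?_⟩
  rw [partDeg_iUnion_of_pairwise_disjoint hP, ← Finset.sum_filter_ne_zero]
  exact Finset.sum_congr rfl fun i hi ↦
    ((partDeg_eq_zero_or_eq (hreg i) v).resolve_left (Finset.mem_filter.1 hi).2)

lemma card_image_le_two_pow_of_exists_finset_sum {α ι : Type*} [Fintype ι] [DecidableEq ι]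
    (s : Finset α) (f : α → ℕ) (ρ : ι → ℕ) (hf : ∀ a ∈ s, ∃ t : Finset ι, f a = ∑ i ∈ t, ρ i) :
    (s.image f).card ≤ 2 ^ Fintype.card ι :=
  calc (s.image f).card
      ≤ ((Finset.univ : Finset (Finset ι)).image fun t ↦ ∑ i ∈ t, ρ i).card := by
        refine Finset.card_le_card fun d hd ↦ ?_
        obtain ⟨a, ha, rfl⟩ := Finset.mem_image.1 hd
        obtain ⟨t, ht⟩ := hf a ha
        exact Finset.mem_image.2 ⟨t, Finset.mem_univ t, ht.symm⟩
    _ ≤ (Finset.univ : Finset (Finset ι)).card := Finset.card_image_le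
    _ = 2 ^ Fintype.card ι := by simp

/-- if the edge set of a finite graph can be partitioned into r regular parts,
then at most 2^r distinct values occur among the vertex degrees. -/
theorem stmt_6 {V : Type*} [Fintype V] (G : SimpleGraph V) (r : ℕ)
    (P : Fin r → Set (Sym2 V))
    (hcover : (⋃ i, P i) = G.edgeSet)
    (hdisj : ∀ i j, i ≠ j → Disjoint (P i) (P j))
    (hreg : ∀ i, IsRegularPart (P i)) :
    (Finset.univ.image fun v : V => partDeg G.edgeSet v).card ≤ 2 ^ r := by
  choose ρ _ hρ using hreg
  simpa using card_image_le_two_pow_of_exists_finset_sum Finset.univ _ ρ fun v _ ↦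
    hcover ▸ exists_partDeg_iUnion_eq_sum (fun i j hij ↦ hdisj i j hij) hρ v
end

section
/- Let G be a finite graph in which every vertex has degree 2 or 4. Then E(G) can be partitioned into two (possibly empty) parts E₁ and E₂ such that in each part every vertex incident to an edge of that part has degree exactly 2 in that part; i.e., G can be decomposed into two 2-regular parts. -/
open SimpleGraph

variable {V : Type*}

/-!
A longest trail inside an edge set `F` with even degrees contains every edge of `F` at its start,
since otherwise it could be prolonged there. It is therefore closed, as an open trail uses an odd
number of edges at its start, and rotating it to start at any of its vertices shows that it
contains every edge of `F` at each of its vertices. Such a saturated closed trail `T` is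
vertex-disjoint from the rest of `F`, which again has even degrees, so induction on `|F|` reduces
everything to a single closed trail in which all degrees are 2 or 4.

Walk along `T`, keeping the colour of the previous edge except on entering a vertex of degree 4,
where the colour switches. A vertex of degree 2 is entered once and sees one colour twice; a vertex
of degree 4 is entered twice and sees each colour twice. The colouring closes up at the start of
`T` because every vertex of degree 4 is entered exactly twice, so the number of switches is even.
-/

theorem partDeg_congr {A B : Set (Sym2 V)} {v : V} (h : ∀ e, v ∈ e → (e ∈ A ↔ e ∈ B)) :
    partDeg A v = partDeg B v := by
  unfold partDeg
  congr 1
  ext e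
  simp only [Set.mem_sep_iff]
  exact ⟨fun ⟨he, hv⟩ => ⟨(h e hv).1 he, hv⟩, fun ⟨he, hv⟩ => ⟨(h e hv).2 he, hv⟩⟩

@[simp] theorem partDeg_empty (v : V) : partDeg (∅ : Set (Sym2 V)) v = 0 := by
  simp [partDeg]

theorem partDeg_mono {A B : Set (Sym2 V)} (hAB : A ⊆ B) (hB : B.Finite) (v : V) :
    partDeg A v ≤ partDeg B v :=
  Set.ncard_le_ncard (fun _ ⟨he, hv⟩ => ⟨hAB he, hv⟩) (hB.subset (Set.sep_subset _ _))

theorem partDeg_setOf_mem [DecidableEq V] {l : List (Sym2 V)} (hl : l.Nodup) (v : V) :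
    partDeg {e | e ∈ l} v = l.countP (v ∈ ·) := by
  have : {e ∈ {e | e ∈ l} | v ∈ e} = ↑(l.filter (v ∈ ·)).toFinset := by
    ext e
    simp
  rw [partDeg, this, Set.ncard_coe_finset, List.toFinset_card_of_nodup (hl.filter _),
    List.countP_eq_length_filter]

def VertexDisjoint (A B : Set (Sym2 V)) : Prop :=
  ∀ e ∈ A, ∀ e' ∈ B, ∀ v ∈ e, v ∉ e'

theorem VertexDisjoint.symm {A B : Set (Sym2 V)} (h : VertexDisjoint A B) : VertexDisjoint B A :=
  fun e he e' he' v hv hv' => h e' he' e he v hv' hv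

theorem VertexDisjoint.mono {A B A' B' : Set (Sym2 V)} (h : VertexDisjoint A B) (hA : A' ⊆ A)
    (hB : B' ⊆ B) : VertexDisjoint A' B' :=
  fun e he e' he' => h e (hA he) e' (hB he')

theorem VertexDisjoint.disjoint {A B : Set (Sym2 V)} (h : VertexDisjoint A B) : Disjoint A B :=
  Set.disjoint_left.mpr fun e hA hB => h e hA e hB _ (Sym2.out_fst_mem e) (Sym2.out_fst_mem e)

theorem VertexDisjoint.partDeg_union_left {A B : Set (Sym2 V)} (h : VertexDisjoint A B) {v : V}
    {e : Sym2 V} (he : e ∈ A) (hv : v ∈ e) : partDeg (A ∪ B) v = partDeg A v :=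
  partDeg_congr fun e' hv' => or_iff_left fun he' => h e he e' he' v hv hv'

theorem IsRegularPartOfDeg.union {r : ℕ} {A B : Set (Sym2 V)} (hA : IsRegularPartOfDeg r A)
    (hB : IsRegularPartOfDeg r B) (h : VertexDisjoint A B) : IsRegularPartOfDeg r (A ∪ B) := by
  rintro v ⟨e, he | he, hv⟩
  · rw [h.partDeg_union_left he hv]
    exact hA v ⟨e, he, hv⟩
  · rw [Set.union_comm, h.symm.partDeg_union_left he hv]
    exact hB v ⟨e, he, hv⟩

def HasTwoRegularDecomposition (F : Set (Sym2 V)) : Prop :=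
  ∃ E₁ E₂ : Set (Sym2 V), E₁ ∪ E₂ = F ∧ Disjoint E₁ E₂ ∧
    IsRegularPartOfDeg 2 E₁ ∧ IsRegularPartOfDeg 2 E₂

theorem hasTwoRegularDecomposition_empty : HasTwoRegularDecomposition (∅ : Set (Sym2 V)) :=
  ⟨∅, ∅, Set.union_empty _, disjoint_bot_left, fun _ ⟨_, he, _⟩ => he.elim,
    fun _ ⟨_, he, _⟩ => he.elim⟩

theorem HasTwoRegularDecomposition.union {A B : Set (Sym2 V)} (hA : HasTwoRegularDecomposition A)
    (hB : HasTwoRegularDecomposition B) (h : VertexDisjoint A B) :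
    HasTwoRegularDecomposition (A ∪ B) := by
  obtain ⟨A₁, A₂, rfl, hA₁₂, hA₁, hA₂⟩ := hA
  obtain ⟨B₁, B₂, rfl, hB₁₂, hB₁, hB₂⟩ := hB
  refine ⟨A₁ ∪ B₁, A₂ ∪ B₂, Set.union_union_union_comm .., ?_,
    hA₁.union hB₁ (h.mono Set.subset_union_left Set.subset_union_left),
    hA₂.union hB₂ (h.mono Set.subset_union_right Set.subset_union_right)⟩
  have hAB := h.disjoint
  simp only [Set.disjoint_union_left, Set.disjoint_union_right] at hAB ⊢
  exact ⟨⟨hA₁₂, hAB.1.2.symm⟩, hAB.2.1, hB₁₂⟩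

theorem List.even_countP_of_count_eq_two {α : Type*} [DecidableEq α] {l : List α} {p : α → Bool}
    (h : ∀ x, p x → l.count x = 2) : Even (l.countP p) := by
  rw [← List.sum_map_count_dedup_filter_eq_countP,
    List.map_congr_left fun x hx => h x (List.mem_filter.mp hx).2]
  simp

section ColorDeg

variable [DecidableEq V]

def colorDeg (L : List (Sym2 V × Bool)) (b : Bool) (v : V) : ℕ :=
  L.countP fun x => v ∈ x.1 ∧ x.2 = b

@[simp] theorem colorDeg_nil (b : Bool) (v : V) : colorDeg [] b v = 0 := rfl

@[simp] theorem colorDeg_cons (e : Sym2 V) (c : Bool) (L : List (Sym2 V × Bool)) (b : Bool)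
    (v : V) : colorDeg ((e, c) :: L) b v = colorDeg L b v + if v ∈ e ∧ c = b then 1 else 0 := by
  simp [colorDeg, List.countP_cons]

theorem colorDeg_true_add_false (L : List (Sym2 V × Bool)) (v : V) :
    colorDeg L true v + colorDeg L false v = (L.map Prod.fst).countP (v ∈ ·) := by
  induction L with
  | nil => rfl
  | cons x L ih =>
    obtain ⟨e, c⟩ := x
    cases c <;> by_cases hv : v ∈ e <;> simp [hv, ← ih] <;> omega

theorem partDeg_setOf_mem_eq_colorDeg {L : List (Sym2 V × Bool)} (hL : (L.map Prod.fst).Nodup)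
    (b : Bool) (v : V) : partDeg {e | (e, b) ∈ L} v = colorDeg L b v := by
  have hclass : {e | (e, b) ∈ L} = {e | e ∈ (L.filter (·.2 = b)).map Prod.fst} := by
    ext e
    simp
  rw [hclass, partDeg_setOf_mem (hL.sublist (List.filter_sublist.map _)), colorDeg,
    List.countP_map, List.countP_filter]
  congr 1
  ext x
  simp [Bool.and_comm]

theorem hasTwoRegularDecomposition_of_colorDeg {L : List (Sym2 V × Bool)}
    (hL : (L.map Prod.fst).Nodup) (hdeg : ∀ b v, colorDeg L b v = 0 ∨ colorDeg L b v = 2) :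
    HasTwoRegularDecomposition {e | e ∈ L.map Prod.fst} := by
  have hreg (b : Bool) : IsRegularPartOfDeg 2 {e | (e, b) ∈ L} := by
    rintro v ⟨e, he, hv⟩
    rw [partDeg_setOf_mem_eq_colorDeg hL]
    have hpos : 0 < colorDeg L b v := List.countP_pos_iff.mpr ⟨(e, b), he, by simp [hv]⟩
    have := hdeg b v
    omega
  refine ⟨{e | (e, true) ∈ L}, {e | (e, false) ∈ L}, ?_, ?_, hreg true, hreg false⟩
  · ext e
    simp only [Set.mem_union, Set.mem_ofPred_eq, List.mem_map, Prod.exists, exists_and_right,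
      exists_eq_right]
    constructor
    · rintro (h | h) <;> exact ⟨_, h⟩
    · rintro ⟨(_ | _), h⟩ <;> simp [h]
  · refine Set.disjoint_left.mpr fun e htrue hfalse => ?_
    simpa using List.inj_on_of_nodup_map hL htrue hfalse rfl

end ColorDeg

namespace SimpleGraph.Walk

variable {G : SimpleGraph V}

section Coloring

variable (f : V → Bool)

def switchColoring : {a b : V} → G.Walk a b → Bool → List (Sym2 V × Bool)
  | _, _, nil, _ => []
  | a, _, cons (v := w) _ q, c => (s(a, w), c) :: q.switchColoring (f w ^^ c)

/-- The colour that `switchColoring` would give to an edge appended after the walk. -/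
def switchColor : {a b : V} → G.Walk a b → Bool → Bool
  | _, _, nil, c => c
  | _, _, cons (v := w) _ q, c => q.switchColor (f w ^^ c)

theorem map_fst_switchColoring {a b : V} (p : G.Walk a b) (c : Bool) :
    (p.switchColoring f c).map Prod.fst = p.edges := by
  induction p generalizing c with
  | nil => rfl
  | cons h q ih => simp [switchColoring, ih]

theorem switchColor_eq_self_iff {a b : V} (p : G.Walk a b) (c : Bool) :
    p.switchColor f c = c ↔ Even (p.support.tail.countP f) := by
  induction p generalizing c with
  | nil => simp [switchColor]
  | @cons a w b h q ih =>
    rw [switchColor, support_cons, List.tail_cons, ← q.cons_tail_support, List.countP_cons]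
    cases hw : f w
    · simpa using ih c
    · have := ih (!c)
      simp only [Bool.true_xor, if_true, Nat.even_add_one, ← this, Bool.eq_not_iff, ne_eq,
        not_not]

variable [DecidableEq V]

theorem colorDeg_switchColoring_true_sub_false {v : V} (hv : f v) :
    ∀ {a b : V} (p : G.Walk a b) (c : Bool),
      (colorDeg (p.switchColoring f c) true v : ℤ) - colorDeg (p.switchColoring f c) false v =
        (if v = a then (if c then 1 else -1) else 0) -
          (if v = b then (if p.switchColor f c then 1 else -1) else 0)
  | _, _, nil, c => by cases c <;> simp [switchColoring, switchColor]
  | a, _, cons (v := w) h q, c => by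
    have ih := colorDeg_switchColoring_true_sub_false hv q (f w ^^ c)
    have hne := h.ne
    simp only [switchColoring, switchColor, colorDeg_cons, Sym2.mem_iff] at ih ⊢
    grind

theorem even_colorDeg_switchColoring {v : V} (hv : f v = false) :
    ∀ {a b : V} (p : G.Walk a b) (c : Bool),
      Even (colorDeg (p.switchColoring f c) true v + (if v = a then c.toNat else 0) +
        (if v = b then (p.switchColor f c).toNat else 0))
  | _, _, nil, c => by cases c <;> simp [switchColoring, switchColor]
  | a, _, cons (v := w) h q, c => by
    have ih := even_colorDeg_switchColoring hv q (f w ^^ c)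
    have hne := h.ne
    simp only [switchColoring, switchColor, colorDeg_cons, Sym2.mem_iff] at ih ⊢
    grind

end Coloring

section Degrees

variable [DecidableEq V]

theorem countP_mem_edges_add {a b : V} (p : G.Walk a b) (v : V) :
    p.edges.countP (v ∈ ·) + (if v = a then 1 else 0) + (if v = b then 1 else 0) =
      2 * p.support.count v := by
  induction p with
  | @nil a => by_cases hv : v = a <;> simp [hv, Ne.symm]
  | @cons a w b h q ih =>
    have hne := h.ne
    simp only [edges_cons, support_cons, List.countP_cons, List.count_cons, Sym2.mem_iff,
      beq_iff_eq] at ih ⊢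
    grind

theorem countP_mem_edges_of_closed {u : V} (p : G.Walk u u) (v : V) :
    p.edges.countP (v ∈ ·) = 2 * p.support.tail.count v := by
  have h := p.countP_mem_edges_add v
  rw [← p.cons_tail_support, List.count_cons] at h
  grind

theorem IsTrail.hasTwoRegularDecomposition {u : V} {p : G.Walk u u} (hp : p.IsTrail)
    (hdeg : ∀ v, p.edges.countP (v ∈ ·) ≤ 4) : HasTwoRegularDecomposition {e | e ∈ p.edges} := by
  set f : V → Bool := fun v => p.edges.countP (v ∈ ·) = 4 with hf
  have hL : (p.switchColoring f false).map Prod.fst = p.edges := p.map_fst_switchColoring f false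
  have hclosed : p.switchColor f false = false := by
    refine (p.switchColor_eq_self_iff f false).mpr
      (List.even_countP_of_count_eq_two fun v hv => ?_)
    have := p.countP_mem_edges_of_closed v
    simp only [hf, decide_eq_true_eq] at hv
    omega
  rw [← hL]
  refine hasTwoRegularDecomposition_of_colorDeg (hL ▸ hp.edges_nodup) fun b v => ?_
  have hsum := colorDeg_true_add_false (p.switchColoring f false) v
  have heven := (hp.even_countP_edges_iff v).mpr fun h => (h rfl).elim
  rw [hL] at hsum
  rw [Nat.even_iff] at heven
  have := hdeg v
  cases hfv : f v
  · have hpar := even_colorDeg_switchColoring f hfv p false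
    simp only [hclosed, Bool.toNat_false, ite_self, add_zero, Nat.even_iff] at hpar
    simp only [hf, decide_eq_false_iff_not] at hfv
    cases b <;> omega
  · have hbal := colorDeg_switchColoring_true_sub_false f hfv p false
    simp only [hclosed, sub_self] at hbal
    simp only [hf, decide_eq_true_eq] at hfv
    cases b <;> omega

end Degrees

section LongestTrail

def IsTrailIn (F : Set (Sym2 V)) {a b : V} (p : G.Walk a b) : Prop :=
  p.IsTrail ∧ ∀ e ∈ p.edges, e ∈ F

theorem IsTrailIn.rotate [DecidableEq V] {F : Set (Sym2 V)} {u v : V} {p : G.Walk u u}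
    (hp : p.IsTrailIn F) (hv : v ∈ p.support) : (p.rotate v hv).IsTrailIn F :=
  ⟨hp.1.rotate hv, fun e he => hp.2 e ((p.rotate_edges v hv).mem_iff.mp he)⟩

theorem IsTrailIn.length_le_card {F : Finset (Sym2 V)} {a b : V} {p : G.Walk a b}
    (hp : p.IsTrailIn ↑F) : p.length ≤ F.card := by
  classical
  calc p.length = p.edges.toFinset.card := by
        rw [List.toFinset_card_of_nodup hp.1.edges_nodup, length_edges]
    _ ≤ F.card := Finset.card_le_card fun e he => hp.2 e (List.mem_toFinset.mp he)

theorem exists_isTrailIn_forall_length_le {F : Finset (Sym2 V)}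
    (hF : (F : Set (Sym2 V)) ⊆ G.edgeSet) (hne : F.Nonempty) :
    ∃ (a b : V) (p : G.Walk a b), p.IsTrailIn ↑F ∧ 0 < p.length ∧
      ∀ (a' b' : V) (q : G.Walk a' b'), q.IsTrailIn ↑F → q.length ≤ p.length := by
  set S := {n | ∃ (a b : V) (p : G.Walk a b), p.IsTrailIn ↑F ∧ p.length = n}
  have hbdd : BddAbove S := ⟨F.card, by rintro _ ⟨a, b, p, hp, rfl⟩; exact hp.length_le_card⟩
  have hone : 1 ∈ S := by
    obtain ⟨e, he⟩ := hne
    induction e using Sym2.ind with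
    | h x y =>
      have hxy : G.Adj x y := hF he
      exact ⟨x, y, cons hxy nil, ⟨by simp, by simpa using he⟩, rfl⟩
  obtain ⟨a, b, p, hp, hlen⟩ := Nat.sSup_mem ⟨1, hone⟩ hbdd
  refine ⟨a, b, p, hp, hlen ▸ le_csSup hbdd hone, fun a' b' q hq => ?_⟩
  exact hlen ▸ le_csSup hbdd ⟨a', b', q, hq, rfl⟩

theorem IsTrailIn.mem_edges_of_forall_length_le {F : Set (Sym2 V)} (hF : F ⊆ G.edgeSet)
    {a b : V} {p : G.Walk a b} (hp : p.IsTrailIn F)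
    (hmax : ∀ (a' b' : V) (q : G.Walk a' b'), q.IsTrailIn F → q.length ≤ p.length)
    {e : Sym2 V} (he : e ∈ F) (ha : a ∈ e) : e ∈ p.edges := by
  by_contra hnot
  obtain ⟨w, rfl⟩ := Sym2.mem_iff_exists.mp ha
  have hwa : G.Adj w a := (hF he).symm
  have hext : (cons hwa p).IsTrailIn F := by
    refine ⟨(isTrail_cons hwa p).mpr ⟨hp.1, by rwa [Sym2.eq_swap]⟩, ?_⟩
    simp only [edges_cons, List.mem_cons, forall_eq_or_imp]
    exact ⟨Sym2.eq_swap ▸ he, hp.2⟩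
  simpa using hmax w b _ hext

theorem exists_closed_isTrailIn_saturated [DecidableEq V] {F : Finset (Sym2 V)}
    (hF : (F : Set (Sym2 V)) ⊆ G.edgeSet) (hne : F.Nonempty)
    (heven : ∀ v, Even (partDeg (F : Set (Sym2 V)) v)) :
    ∃ (u : V) (p : G.Walk u u), p.IsTrailIn ↑F ∧ 0 < p.length ∧
      ∀ e ∈ F, ∀ v ∈ e, v ∈ p.support → e ∈ p.edges := by
  obtain ⟨a, b, p, hp, hpos, hmax⟩ := exists_isTrailIn_forall_length_le hF hne
  obtain rfl : a = b := by
    by_contra hab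
    refine (hp.1.even_countP_edges_iff a).not.mpr (by simp [hab]) ?_
    have hdeg : partDeg {e | e ∈ p.edges} a = partDeg (F : Set (Sym2 V)) a :=
      partDeg_congr fun e ha => ⟨hp.2 e, fun he => hp.mem_edges_of_forall_length_le hF hmax he ha⟩
    rw [← partDeg_setOf_mem hp.1.edges_nodup, hdeg]
    exact heven a
  refine ⟨a, p, hp, hpos, fun e he v hv hvp => ?_⟩
  rw [← (p.rotate_edges v hvp).mem_iff]
  exact (hp.rotate hvp).mem_edges_of_forall_length_le hF (by simpa using hmax) he hv

section Saturated

variable [DecidableEq V] {F : Finset (Sym2 V)} {a b : V} {p : G.Walk a b}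

theorem vertexDisjoint_filter_not_mem_edges (hsat : ∀ e ∈ F, ∀ v ∈ e, v ∈ p.support → e ∈ p.edges) :
    VertexDisjoint {e | e ∈ p.edges} ↑(F.filter (· ∉ p.edges)) := by
  intro e he e' he' v hv hv'
  rw [Finset.mem_coe, Finset.mem_filter] at he'
  exact he'.2 (hsat e' he'.1 v hv' (mem_support_of_mem_edges he hv))

theorem partDeg_filter_not_mem_edges (hsat : ∀ e ∈ F, ∀ v ∈ e, v ∈ p.support → e ∈ p.edges)
    (v : V) : partDeg (↑(F.filter (· ∉ p.edges)) : Set (Sym2 V)) v = 0 ∨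
      partDeg (↑(F.filter (· ∉ p.edges)) : Set (Sym2 V)) v = partDeg (F : Set (Sym2 V)) v := by
  by_cases hv : v ∈ p.support
  · refine .inl ((partDeg_congr (B := ∅) fun e hve => ?_).trans (partDeg_empty v))
    simpa using fun he => hsat e he v hve hv
  · refine .inr (partDeg_congr fun e hve => ?_)
    simpa using fun _ hep => hv (mem_support_of_mem_edges hep hve)

end Saturated

end LongestTrail

end SimpleGraph.Walk

theorem hasTwoRegularDecomposition_of_even_of_le_four [DecidableEq V] {G : SimpleGraph V}
    (F : Finset (Sym2 V)) (hF : (F : Set (Sym2 V)) ⊆ G.edgeSet)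
    (heven : ∀ v, Even (partDeg (F : Set (Sym2 V)) v))
    (hle : ∀ v, partDeg (F : Set (Sym2 V)) v ≤ 4) :
    HasTwoRegularDecomposition (F : Set (Sym2 V)) := by
  induction F using Finset.strongInduction with
  | H F ih =>
  rcases F.eq_empty_or_nonempty with rfl | hne
  · simpa using hasTwoRegularDecomposition_empty
  obtain ⟨u, T, hT, hpos, hsat⟩ := Walk.exists_closed_isTrailIn_saturated hF hne heven
  have hR : HasTwoRegularDecomposition (F.filter (· ∉ T.edges) : Set (Sym2 V)) := by
    obtain ⟨e, he⟩ : ∃ e, e ∈ T.edges := List.exists_mem_of_length_pos (by simpa using hpos)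
    refine ih _ (Finset.filter_ssubset.mpr ⟨e, hT.2 e he, by simpa using he⟩)
      ((Finset.coe_subset.mpr (Finset.filter_subset _ _)).trans hF) (fun v => ?_) (fun v => ?_)
      <;> rcases Walk.partDeg_filter_not_mem_edges hsat v with h | h
      <;> rw [h] <;> simp [heven v, hle v]
  have hT_deg (v : V) : T.edges.countP (v ∈ ·) ≤ 4 := by
    rw [← partDeg_setOf_mem hT.1.edges_nodup]
    exact (partDeg_mono hT.2 F.finite_toSet v).trans (hle v)
  have hsplit : (F : Set (Sym2 V)) = {e | e ∈ T.edges} ∪ ↑(F.filter (· ∉ T.edges)) := by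
    ext e
    have := hT.2 e
    simp only [Finset.coe_filter, Set.mem_union, Set.mem_ofPred_eq, Finset.mem_coe]
    tauto
  rw [hsplit]
  exact (hT.1.hasTwoRegularDecomposition hT_deg).union hR
    (Walk.vertexDisjoint_filter_not_mem_edges hsat)

/-- a finite graph all of whose vertex degrees are 2 or 4 can be decomposed into
two 2-regular parts. -/
theorem stmt_8 {V : Type*} [Fintype V] (G : SimpleGraph V)
    (hdeg : ∀ v : V, partDeg G.edgeSet v = 2 ∨ partDeg G.edgeSet v = 4) :
    ∃ E₁ E₂ : Set (Sym2 V),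
      E₁ ∪ E₂ = G.edgeSet ∧ Disjoint E₁ E₂ ∧
      IsRegularPartOfDeg 2 E₁ ∧ IsRegularPartOfDeg 2 E₂ := by
  classical
  have h := hasTwoRegularDecomposition_of_even_of_le_four (G := G) G.edgeFinset (by simp)
    (fun v => by rcases hdeg v with h | h <;> simp [h, Nat.even_iff])
    (fun v => by rcases hdeg v with h | h <;> simp [h])
  simpa [HasTwoRegularDecomposition] using h
end
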